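/- arXiv:2502.03939 — 2 statements merged into one kernel-verified Lean document; each statement's English description precedes it below -/
import Mathlib

section
/- Let C be a configuration of k robots on an n-ring that is in task T7 and was reached along an execution under a Round Robin scheduler from a configuration in task T5 (directly by a move m5, or via task T6 with moves m6). Suppose every robot activated in a configuration in T7 executes move m7. Then within at most 1 epoch after C the execution reaches a configuration in task T8, i.e., all robots occupy one common vertex and Gathering is solved. -/
/-!
Robots on an anonymous `n`-ring (the cycle on `ZMod n`).  A configuration of `k`
robots is a function `Fin k → ZMod n` (several robots may share a vertex: a
multiplicity).  Robots are anonymous, oblivious and disoriented: an algorithm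
only sees the set of occupied vertices expressed as offsets in the robot's own
local frame, whose orientation (reflection) is chosen by the adversary at each
activation.  A sequential scheduler activates one robot per round.
-/

namespace RobotRing

/-- A configuration of `k` robots on the `n`-ring: robot `i` sits on vertex `C i`. -/
abbrev Config (n k : ℕ) := Fin k → ZMod n

/-- The set of occupied vertices of a configuration. -/
def occ {n k : ℕ} (C : Config n k) : Set (ZMod n) := Set.range C

/-- A boolean orientation viewed as the ring element `±1`. -/
def sgn {n : ℕ} (e : Bool) : ZMod n := if e then 1 else -1

/-- The local view of a robot located at `p` whose local frame has orientation `e`: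
the occupied vertices, expressed as offsets in the robot's local frame
(robots cannot detect multiplicities, and perceive positions only relative to
themselves, up to reflection). -/
def view {n k : ℕ} (C : Config n k) (p : ZMod n) (e : Bool) : Set (ZMod n) :=
  {d : ZMod n | p + sgn e * d ∈ occ C}

/-- A deterministic algorithm: to every local view it assigns a move,
`0` = stay still (nil), `±1` = move to an adjacent vertex, in the local frame. -/
abbrev Algo (n : ℕ) := Set (ZMod n) → SignType

/-- One activation: robot `i` is activated, the adversary chooses the orientation
`e` of its local frame (robots are disoriented and chirality-free, so a
reflection-ambiguous move direction is resolved by the adversary), and the robot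
moves instantaneously as the algorithm prescribes on its view. -/
def step {n k : ℕ} (A : Algo n) (C : Config n k) (i : Fin k) (e : Bool) : Config n k :=
  Function.update C i (C i + sgn e * (SignType.cast (A (view C (C i) e)) : ZMod n))

/-- The execution of algorithm `A` from the initial configuration `C₀` under the
sequential scheduler `sched` (one robot per round) and the adversarial
orientation choices `env`. -/
def exec {n k : ℕ} (A : Algo n) (C₀ : Config n k) (sched : ℕ → Fin k) (env : ℕ → Bool) :
    ℕ → Config n k
  | 0 => C₀
  | t + 1 => step A (exec A C₀ sched env t) (sched t) (env t)

/-- Fairness of a sequential (SEQ) scheduler: every robot is activated infinitely often. -/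
def Fair {k : ℕ} (sched : ℕ → Fin k) : Prop :=
  ∀ (i : Fin k) (t : ℕ), ∃ t' ≥ t, sched t' = i

/-- A Round Robin scheduler: the `k` robots are activated one per round in a fixed
order which repeats forever (each robot is activated exactly once per epoch of
`k` consecutive rounds). -/
def IsRoundRobin {k : ℕ} (sched : ℕ → Fin k) : Prop :=
  ∃ π : Equiv.Perm (Fin k), ∀ (t : ℕ) (h : t % k < k), sched t = π ⟨t % k, h⟩

/-- The execution `E` solves Gathering: after finitely many rounds all robots
occupy one common vertex and no robot ever moves afterwards. -/
def Solves {n k : ℕ} (E : ℕ → Config n k) : Prop :=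
  ∃ T : ℕ, ∀ t ≥ T, (∀ i j : Fin k, E t i = E t j) ∧ E (t + 1) = E t

/-- The ring distance between two vertices of the `n`-ring. -/
def ringDist {n : ℕ} (a b : ZMod n) : ℕ := min (a - b).val (b - a).val

/-! ### Holes, islands, the boolean properties, the tasks `T1`–`T8`,
the unsolvable configurations `UC`, and the moves `m1`–`m7` of GatheRRing. -/

/-- The arc of `m` consecutive vertices of the ring starting at `a`. -/
def arc {n : ℕ} (a : ZMod n) (m : ℕ) : Set (ZMod n) :=
  {v | ∃ i : ℕ, i < m ∧ v = a + (i : ZMod n)}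

/-- `H` is a hole of the occupied set `S`: a maximal nonempty set of consecutive
empty vertices. -/
def IsHole {n : ℕ} (S H : Set (ZMod n)) : Prop :=
  ∃ (a : ZMod n) (m : ℕ), 0 < m ∧ H = arc a m ∧ (∀ v ∈ H, v ∉ S) ∧
    a - 1 ∈ S ∧ a + (m : ZMod n) ∈ S

/-- `I` is an island of the occupied set `S`: a maximal set of consecutive
occupied vertices. -/
def IsIsland {n : ℕ} (S I : Set (ZMod n)) : Prop :=
  ∃ (a : ZMod n) (m : ℕ), 0 < m ∧ I = arc a m ∧ (∀ v ∈ I, v ∈ S) ∧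
    a - 1 ∉ S ∧ a + (m : ZMod n) ∉ S

/-- `f`: there are no holes. -/
def propF {n : ℕ} (S : Set (ZMod n)) : Prop := ¬ ∃ H, IsHole S H

/-- `b4`: there is exactly one hole, of size at most `4`. -/
def propB4 {n : ℕ} (S : Set (ZMod n)) : Prop :=
  ∃ H, IsHole S H ∧ H.ncard ≤ 4 ∧ ∀ H', IsHole S H' → H' = H

/-- `b5`: there is exactly one hole, of size at least `5`. -/
def propB5 {n : ℕ} (S : Set (ZMod n)) : Prop :=
  ∃ H, IsHole S H ∧ 5 ≤ H.ncard ∧ ∀ H', IsHole S H' → H' = H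

/-- `h`: there are exactly two holes, one of size `1`, the other of size greater than `1`. -/
def propH {n : ℕ} (S : Set (ZMod n)) : Prop :=
  ∃ H₁ H₂, IsHole S H₁ ∧ IsHole S H₂ ∧ H₁ ≠ H₂ ∧ H₁.ncard = 1 ∧ 1 < H₂.ncard ∧
    ∀ H, IsHole S H → H = H₁ ∨ H = H₂

/-- `o1`: exactly one vertex is occupied. -/
def propO1 {n : ℕ} (S : Set (ZMod n)) : Prop := ∃ u : ZMod n, S = {u}

/-- `o2`: exactly two adjacent vertices are occupied. -/
def propO2 {n : ℕ} (S : Set (ZMod n)) : Prop := ∃ u : ZMod n, S = {u, u + 1}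

/-- `o3`: exactly three consecutive vertices are occupied. -/
def propO3 {n : ℕ} (S : Set (ZMod n)) : Prop := ∃ u : ZMod n, S = {u, u + 1, u + 2}

/-- `p`: exactly two vertices are occupied, separated by exactly one empty vertex. -/
def propP {n : ℕ} (S : Set (ZMod n)) : Prop := ∃ u : ZMod n, S = {u, u + 2} ∧ u + 1 ∉ S

/-- Task `T8` (`pre8 = o1`, no higher task). -/
def inT8 {n : ℕ} (S : Set (ZMod n)) : Prop := propO1 S

def inT7 {n : ℕ} (S : Set (ZMod n)) : Prop := propO2 S ∧ ¬ propO1 S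

def inT6 {n : ℕ} (S : Set (ZMod n)) : Prop := propO3 S ∧ ¬ propO2 S ∧ ¬ propO1 S

def inT5 {n : ℕ} (S : Set (ZMod n)) : Prop :=
  propP S ∧ ¬ propO3 S ∧ ¬ propO2 S ∧ ¬ propO1 S

def inT4 {n : ℕ} (S : Set (ZMod n)) : Prop :=
  propH S ∧ ¬ propP S ∧ ¬ propO3 S ∧ ¬ propO2 S ∧ ¬ propO1 S

def inT3 {n : ℕ} (S : Set (ZMod n)) : Prop :=
  propB5 S ∧ ¬ propH S ∧ ¬ propP S ∧ ¬ propO3 S ∧ ¬ propO2 S ∧ ¬ propO1 S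

def inT2 {n : ℕ} (S : Set (ZMod n)) : Prop :=
  (propB4 S ∨ propF S) ∧ ¬ propB5 S ∧ ¬ propH S ∧ ¬ propP S ∧ ¬ propO3 S ∧
    ¬ propO2 S ∧ ¬ propO1 S

def inT1 {n : ℕ} (S : Set (ZMod n)) : Prop :=
  ¬ (propB4 S ∨ propF S) ∧ ¬ propB5 S ∧ ¬ propH S ∧ ¬ propP S ∧ ¬ propO3 S ∧
    ¬ propO2 S ∧ ¬ propO1 S

/-- The unsolvable configurations (the set `UC`) for Gathering under Round Robin. -/
def UC {n k : ℕ} (C : Config n k) : Prop :=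
  (3 ≤ k ∧ ∃ u : ZMod n, occ C = {u, u + 1}) ∨
  (3 ≤ k ∧ ∃ u : ZMod n, occ C = {u, u + 1, u + 2}) ∨
  (n + 1 ≤ k ∧ occ C = Set.univ) ∨
  (n = 5 ∧ 5 ≤ k ∧ (occ C).ncard = 3 ∧
    ∃ v : ZMod n, (∃ i j : Fin k, i ≠ j ∧ C i = v ∧ C j = v) ∧
      (v + 1 ∈ occ C ∨ v - 1 ∈ occ C)) ∨
  (n = 5 ∧ 5 ≤ k ∧ (occ C).ncard = 4)

/-- `H` is a hole of maximum size (if several holes share the maximum size,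
they are all "biggest holes"). -/
def IsMaxHole {n : ℕ} (S H : Set (ZMod n)) : Prop :=
  IsHole S H ∧ ∀ H', IsHole S H' → H'.ncard ≤ H.ncard

/-- There is a unique hole of maximum size. -/
def UniqueMaxHole {n : ℕ} (S : Set (ZMod n)) : Prop :=
  ∀ H H', IsMaxHole S H → IsMaxHole S H' → H = H'

/-- All islands have size `2`. -/
def AllIslands2 {n : ℕ} (S : Set (ZMod n)) : Prop :=
  ∀ I, IsIsland S I → I.ncard = 2

/-- The distance from `v` to its closest empty vertex in direction `d`. -/
noncomputable def emptyDist {n : ℕ} (S : Set (ZMod n)) (v d : ZMod n) : ℕ :=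
  sInf {m : ℕ | 0 < m ∧ v + (m : ZMod n) * d ∉ S}

/-- A direction on the ring: one of the two unit steps. -/
def Dir {n : ℕ} (d : ZMod n) : Prop := d = 1 ∨ d = -1

/-- The vertex `v` is neighboring a hole of maximum size. -/
def AdjMaxHole {n : ℕ} (S : Set (ZMod n)) (v : ZMod n) : Prop :=
  ∃ H, IsMaxHole S H ∧ (v + 1 ∈ H ∨ v - 1 ∈ H)

/-- Exactly `n - 2` vertices are occupied and the occupied vertices are not all
consecutive. -/
def SpecialN2 {n : ℕ} (S : Set (ZMod n)) : Prop :=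
  S.ncard = n - 2 ∧ ¬ ∃ a : ZMod n, S = arc a (n - 2)

/-- The vertex `v` is neighboring exactly one empty vertex. -/
def OneEmptyNbr {n : ℕ} (S : Set (ZMod n)) (v : ZMod n) : Prop :=
  (v + 1 ∉ S ∧ v - 1 ∈ S) ∨ (v + 1 ∈ S ∧ v - 1 ∉ S)

/-- Move `m1`, as a relation: activating robot `i` in configuration `C` can
produce `C'` (all remaining ties are resolved by the adversary). -/
def M1 {n k : ℕ} (C : Config n k) (i : Fin k) (C' : Config n k) : Prop :=
  (¬ AdjMaxHole (occ C) (C i) ∧ C' = C) ∨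
  (AdjMaxHole (occ C) (C i) ∧
    ((AllIslands2 (occ C) ∧ ¬ UniqueMaxHole (occ C) ∧
        ∃ d : ZMod n, Dir d ∧
          emptyDist (occ C) (C i) d ≤ emptyDist (occ C) (C i) (-d) ∧
          C' = Function.update C i (C i + d)) ∨
     (AllIslands2 (occ C) ∧ UniqueMaxHole (occ C) ∧
        ∃ d : ZMod n, Dir d ∧ C i + d ∈ occ C ∧
          C' = Function.update C i (C i + d)) ∨
     (¬ AllIslands2 (occ C) ∧ SpecialN2 (occ C) ∧ OneEmptyNbr (occ C) (C i) ∧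
        ∃ d : ZMod n, Dir d ∧ C i + d ∈ occ C ∧
          C' = Function.update C i (C i + d)) ∨
     (¬ AllIslands2 (occ C) ∧ SpecialN2 (occ C) ∧ ¬ OneEmptyNbr (occ C) (C i) ∧
        C' = C) ∨
     (¬ AllIslands2 (occ C) ∧ ¬ SpecialN2 (occ C) ∧
        ∃ d : ZMod n, Dir d ∧ (∃ H, IsMaxHole (occ C) H ∧ C i - d ∈ H) ∧
          C' = Function.update C i (C i + d))))

/-- Move `m2`, as a relation. -/
def M2 {n k : ℕ} (C : Config n k) (i : Fin k) (C' : Config n k) : Prop :=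
  (¬ (C i + 1 ∈ occ C ∧ C i - 1 ∈ occ C) ∧ C' = C) ∨
  ((C i + 1 ∈ occ C ∧ C i - 1 ∈ occ C) ∧
    ((∃ w : ZMod n, n = 6 ∧ IsHole (occ C) {w} ∧ (∀ H, IsHole (occ C) H → H = {w}) ∧
        ((C i ≠ w + 3 ∧
            ∃ d : ZMod n, Dir d ∧ ringDist (C i) w < ringDist (C i + d) w ∧
              C' = Function.update C i (C i + d)) ∨
         (C i = w + 3 ∧ C' = C))) ∨
     (¬ (∃ w : ZMod n, n = 6 ∧ IsHole (occ C) {w} ∧ ∀ H, IsHole (occ C) H → H = {w}) ∧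
        ∃ d : ZMod n, Dir d ∧
          emptyDist (occ C) (C i) d ≤ emptyDist (occ C) (C i) (-d) ∧
          C' = Function.update C i (C i + d))))

/-- Move `m3`, as a relation: move toward an empty neighbor, if any. -/
def M3 {n k : ℕ} (C : Config n k) (i : Fin k) (C' : Config n k) : Prop :=
  (∃ d : ZMod n, Dir d ∧ C i + d ∉ occ C ∧ C' = Function.update C i (C i + d)) ∨
  ((∀ d : ZMod n, Dir d → C i + d ∈ occ C) ∧ C' = C)

/-- Move `m4`, as a relation. -/
def M4 {n k : ℕ} (C : Config n k) (i : Fin k) (C' : Config n k) : Prop :=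
  (∃ d : ZMod n, Dir d ∧ (∃ H, IsMaxHole (occ C) H ∧ C i + d ∈ H) ∧ C i - d ∈ occ C ∧
     C' = Function.update C i (C i - d)) ∨
  ((¬ ∃ d : ZMod n, Dir d ∧ (∃ H, IsMaxHole (occ C) H ∧ C i + d ∈ H) ∧ C i - d ∈ occ C) ∧
     C' = C)

/-- Move `m5`, as a relation: move onto the single empty vertex lying between the
two occupied vertices (a tie is resolved by the adversary). -/
def M5 {n k : ℕ} (C : Config n k) (i : Fin k) (C' : Config n k) : Prop :=
  ∃ d : ZMod n, Dir d ∧ C i + d ∉ occ C ∧ C i + d + d ∈ occ C ∧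
    C' = Function.update C i (C i + d)

/-- Move `m6`, as a relation: a robot neighboring an empty vertex moves toward its
occupied neighbor. -/
def M6 {n k : ℕ} (C : Config n k) (i : Fin k) (C' : Config n k) : Prop :=
  (∃ d : ZMod n, Dir d ∧ C i + d ∉ occ C ∧ C i - d ∈ occ C ∧
     C' = Function.update C i (C i - d)) ∨
  ((∀ d : ZMod n, Dir d → C i + d ∈ occ C) ∧ C' = C)

/-- Move `m7`, as a relation: move toward the occupied neighbor. -/
def M7 {n k : ℕ} (C : Config n k) (i : Fin k) (C' : Config n k) : Prop :=
  ∃ d : ZMod n, Dir d ∧ C i + d ∈ occ C ∧ C' = Function.update C i (C i + d)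

/-- One step of Algorithm GatheRRing: the activated robot determines the task of
the perceived configuration and executes the corresponding move (`nil` in `T8`). -/
def GStep {n k : ℕ} (C : Config n k) (i : Fin k) (C' : Config n k) : Prop :=
  (inT1 (occ C) ∧ M1 C i C') ∨ (inT2 (occ C) ∧ M2 C i C') ∨
  (inT3 (occ C) ∧ M3 C i C') ∨ (inT4 (occ C) ∧ M4 C i C') ∨
  (inT5 (occ C) ∧ M5 C i C') ∨ (inT6 (occ C) ∧ M6 C i C') ∨
  (inT7 (occ C) ∧ M7 C i C') ∨ (inT8 (occ C) ∧ C' = C)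


lemma castNeZero {n : ℕ} (m : ℕ) (h0 : 0 < m) (hm : m < n) : (m : ZMod n) ≠ 0 := by
  rw [Ne, ZMod.natCast_eq_zero_iff]
  intro h
  exact absurd (Nat.le_of_dvd h0 h) (by omega)

lemma three_ne_pair {α : Type*} {a b c q r : α} (hab : a ≠ b) (hac : a ≠ c) (hbc : b ≠ c)
    (ha : a = q ∨ a = r) (hb : b = q ∨ b = r) (hc : c = q ∨ c = r) : False := by
  rcases ha with rfl | rfl <;> rcases hb with rfl | rfl <;> rcases hc with rfl | rfl <;> simp_all

lemma adjMid {n : ℕ} (h2 : (2 : ZMod n) ≠ 0) {mid p x : ZMod n}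
    (hm1 : mid + 1 = p ∨ mid + 1 = p + 2) (hm2 : mid - 1 = p ∨ mid - 1 = p + 2)
    (hx : x = p ∨ x = p + 2) : x = mid + 1 ∨ x = mid - 1 := by
  rcases hm1 with h | h <;> rcases hm2 with h' | h' <;> rcases hx with rfl | rfl
  · exact Or.inl h.symm
  · exact absurd (by linear_combination h - h') h2
  · exact Or.inl h.symm
  · exact Or.inr h'.symm
  · exact Or.inr h'.symm
  · exact Or.inl h.symm
  · exact absurd (by linear_combination h - h') h2
  · exact Or.inl h.symm

/-- let `C` be a configuration in task `T7` reached, along an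
execution under a Round Robin scheduler, from a configuration in task `T5`
(directly by a move `m5`, or via task `T6` with moves `m6`).  If every robot
activated in a configuration in `T7` executes move `m7`, then within at most `1`
epoch (`k` rounds) after `C` the execution reaches a configuration in task `T8`,
i.e. all robots occupy one common vertex and Gathering is solved. -/
theorem stmt15 (n k : ℕ) (hn : 3 ≤ n)
    (sched : ℕ → Fin k) (hRR : IsRoundRobin sched)
    (E : ℕ → Config n k) (t₀ t₁ : ℕ) (h01 : t₀ ≤ t₁)
    (h5 : inT5 (occ (E t₀)))
    (hmid : ∀ s, t₀ ≤ s → s < t₁ →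
      (inT5 (occ (E s)) ∨ inT6 (occ (E s))) ∧
      (inT5 (occ (E s)) → M5 (E s) (sched s) (E (s + 1))) ∧
      (inT6 (occ (E s)) → M6 (E s) (sched s) (E (s + 1))))
    (C : Config n k) (hC : C = E t₁) (hT7 : inT7 (occ C))
    (hstep : ∀ t, inT7 (occ (E t)) → M7 (E t) (sched t) (E (t + 1))) :
    ∃ t, t₁ ≤ t ∧ t ≤ t₁ + k ∧ inT8 (occ (E t)) ∧
      ∀ i j : Fin k, E t i = E t j := by
  classical
  obtain ⟨π, hπ⟩ := hRR
  obtain ⟨hP0, hnO3, hnO2, hnO1⟩ := h5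
  obtain ⟨p, hocc0, hp1⟩ := hP0
  obtain ⟨hO2C, hnO1C⟩ := hT7
  rw [hC] at hO2C hnO1C
  obtain ⟨u, hu⟩ := hO2C
  have hk : 0 < k := by
    have hmu : u ∈ occ (E t₁) := by rw [hu]; exact Set.mem_insert _ _
    obtain ⟨i, -⟩ := hmu
    exact i.pos
  have h1 : (1 : ZMod n) ≠ 0 := by
    have := castNeZero (n := n) 1 one_pos (by omega)
    simpa using this
  have h2 : (2 : ZMod n) ≠ 0 := by
    have := castNeZero (n := n) 2 two_pos (by omega)
    simpa using this
  have hmem0 : ∀ x : ZMod n, x ∈ occ (E t₀) ↔ (x = p ∨ x = p + 2) := by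
    intro x; rw [hocc0]; simp
  have h3 : (3 : ZMod n) ≠ 0 := by
    rcases Nat.lt_or_ge n 4 with h4 | h4
    · intro h3z
      refine hnO2 ⟨p + 2, ?_⟩
      rw [hocc0, show p + 2 + 1 = p from by linear_combination h3z]
      exact Set.pair_comm p (p + 2)
    · have := castNeZero (n := n) 3 (by omega) (by omega)
      simpa using this
  have hpne : p ≠ p + 2 := fun he => h2 (by linear_combination -he)
  -- scheduler facts
  have hsched : ∀ t, sched t = π ⟨t % k, Nat.mod_lt t hk⟩ := fun t => hπ t (Nat.mod_lt t hk)
  have hmodeq : ∀ a b : ℕ, sched a = sched b → a % k = b % k := by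
    intro a b hab
    rw [hsched a, hsched b] at hab
    have := π.injective hab
    simpa [Fin.ext_iff] using this
  have hwin : ∀ (i : Fin k) (t : ℕ), ∃ s, t ≤ s ∧ s < t + k ∧ sched s = i := by
    intro i t
    have hrk : (π.symm i : ℕ) < k := (π.symm i).isLt
    have key : ∀ s, s % k = (π.symm i : ℕ) → sched s = i := by
      intro s hs
      rw [hsched s]
      have hfe : (⟨s % k, Nat.mod_lt s hk⟩ : Fin k) = π.symm i := Fin.ext (by simpa using hs)
      rw [hfe, Equiv.apply_symm_apply]
    have hdm := Nat.div_add_mod t k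
    have hmt := Nat.mod_lt t hk
    rcases le_or_gt (t % k) (π.symm i : ℕ) with h | h
    · refine ⟨k * (t / k) + (π.symm i : ℕ), by omega, by omega, key _ ?_⟩
      rw [Nat.mul_add_mod, Nat.mod_eq_of_lt hrk]
    · refine ⟨k * (t / k) + (k + (π.symm i : ℕ)), by omega, by omega, key _ ?_⟩
      rw [Nat.mul_add_mod, Nat.add_mod_left, Nat.mod_eq_of_lt hrk]
  have huniq : ∀ a b : ℕ, a < b → b < a + k → sched a = sched b → False := by
    intro a b hab hbk he
    have hm := hmodeq a b he
    have hd : k ∣ b - a := (Nat.modEq_iff_dvd' (le_of_lt hab)).1 hm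
    have := Nat.le_of_dvd (by omega) hd
    omega
  -- Phase 1 invariant
  have key1 : ∀ s, t₀ ≤ s → s ≤ t₁ → ∃ mid : ZMod n,
      (mid + 1 = p ∨ mid + 1 = p + 2) ∧ (mid - 1 = p ∨ mid - 1 = p + 2) ∧
      mid ≠ p ∧ mid ≠ p + 2 ∧
      ∀ i : Fin k,
        ((∃ r, t₀ ≤ r ∧ r < s ∧ sched r = i) → E s i = mid) ∧
        (¬ (∃ r, t₀ ≤ r ∧ r < s ∧ sched r = i) → E s i = E t₀ i) := by
    intro s hs
    induction s, hs using Nat.le_induction with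
    | base =>
      intro _
      refine ⟨p + 1, Or.inr (by ring), Or.inl (by ring), ?_, ?_, ?_⟩
      · intro he; exact hp1 ((hmem0 _).2 (Or.inl he))
      · intro he; exact hp1 ((hmem0 _).2 (Or.inr he))
      · intro i
        constructor
        · rintro ⟨r, hr1, hr2, -⟩; omega
        · intro _; rfl
    | succ s hs ih =>
      intro hs1
      have hslt : s < t₁ := hs1
      obtain ⟨mid, hm1, hm2, hmp, hmp2, hpos⟩ := ih (le_of_lt hslt)
      obtain ⟨hT56, hM5, hM6⟩ := hmid s hs hslt
      by_cases hA : ∃ i : Fin k, ∃ r, t₀ ≤ r ∧ r < s ∧ sched r = i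
      · obtain ⟨i₀, hi₀⟩ := hA
        have hmids : E s i₀ = mid := (hpos i₀).1 hi₀
        by_cases hQp : ∃ i : Fin k, ¬ (∃ r, t₀ ≤ r ∧ r < s ∧ sched r = i) ∧ E t₀ i = p
        · by_cases hQq : ∃ i : Fin k, ¬ (∃ r, t₀ ≤ r ∧ r < s ∧ sched r = i) ∧ E t₀ i = p + 2
          · -- main T6 case : occ (E s) = {mid, p, p+2}
            have hocS : occ (E s) = {mid, p, p + 2} := by
              ext y
              simp only [occ, Set.mem_range, Set.mem_insert_iff, Set.mem_singleton_iff]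
              constructor
              · rintro ⟨i, rfl⟩
                by_cases hai : ∃ r, t₀ ≤ r ∧ r < s ∧ sched r = i
                · exact Or.inl ((hpos i).1 hai)
                · have hh := (hpos i).2 hai
                  rw [hh]
                  exact Or.inr ((hmem0 _).1 (Set.mem_range_self i))
              · rintro (rfl | rfl | rfl)
                · exact ⟨i₀, hmids⟩
                · obtain ⟨i, hna, hei⟩ := hQp; exact ⟨i, by rw [(hpos i).2 hna, hei]⟩
                · obtain ⟨i, hna, hei⟩ := hQq; exact ⟨i, by rw [(hpos i).2 hna, hei]⟩
            have hT6 : inT6 (occ (E s)) := by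
              rcases hT56 with h | h
              · exfalso
                obtain ⟨⟨q, hq, -⟩, -⟩ := h
                have hmq : mid = q ∨ mid = q + 2 := by
                  have hx : mid ∈ occ (E s) := by rw [hocS]; exact Set.mem_insert _ _
                  rw [hq] at hx; simpa using hx
                have hpq : p = q ∨ p = q + 2 := by
                  have hx : p ∈ occ (E s) := by rw [hocS]; simp
                  rw [hq] at hx; simpa using hx
                have hpq2 : p + 2 = q ∨ p + 2 = q + 2 := by
                  have hx : p + 2 ∈ occ (E s) := by rw [hocS]; simp
                  rw [hq] at hx; simpa using hx
                exact three_ne_pair hmp hmp2 hpne hmq hpq hpq2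
              · exact h
            have hM6s := hM6 hT6
            by_cases haj : ∃ r, t₀ ≤ r ∧ r < s ∧ sched r = sched s
            · -- activated robot sits at mid and stays
              have hEj : E s (sched s) = mid := (hpos (sched s)).1 haj
              have hC' : E (s + 1) = E s := by
                rcases hM6s with ⟨d, hd, hout, -, -⟩ | ⟨-, hC'⟩
                · exfalso
                  rw [hEj] at hout
                  apply hout
                  rw [hocS]
                  rcases hd with rfl | rfl
                  · rcases hm1 with h | h
                    · rw [h]; simp
                    · rw [h]; simp
                  · rcases hm2 with h | h
                    · rw [show mid + -1 = mid - 1 from by ring, h]; simp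
                    · rw [show mid + -1 = mid - 1 from by ring, h]; simp
                · exact hC'
              refine ⟨mid, hm1, hm2, hmp, hmp2, ?_⟩
              intro i
              constructor
              · rintro ⟨r, hr0, hrs1, hre⟩
                rw [hC']
                rcases Nat.lt_succ_iff_lt_or_eq.1 hrs1 with h | rfl
                · exact (hpos i).1 ⟨r, hr0, h, hre⟩
                · rw [← hre]; exact hEj
              · intro hna
                rw [hC']
                exact (hpos i).2 (fun ⟨r, a, b, c⟩ => hna ⟨r, a, by omega, c⟩)
            · -- fresh robot moves to mid
              have hxs : E s (sched s) = E t₀ (sched s) := (hpos (sched s)).2 haj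
              have hx : E t₀ (sched s) = p ∨ E t₀ (sched s) = p + 2 :=
                (hmem0 _).1 (Set.mem_range_self (sched s))
              have hadj : E t₀ (sched s) = mid + 1 ∨ E t₀ (sched s) = mid - 1 :=
                adjMid h2 hm1 hm2 hx
              have hfar : ∀ e : ZMod n, (e = 1 ∨ e = -1) → (mid + e = p ∨ mid + e = p + 2) →
                  E t₀ (sched s) = mid + e → E s (sched s) + e ∉ occ (E s) := by
                intro e hev hme hje hmem
                rw [hxs, hje, hocS] at hmem
                simp only [Set.mem_insert_iff, Set.mem_singleton_iff] at hmem
                rcases hmem with h | h | h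
                · rcases hev with rfl | rfl
                  · exact h2 (by linear_combination h)
                  · exact h2 (by linear_combination -h)
                · rcases hme with h' | h'
                  · rcases hev with rfl | rfl
                    · exact h1 (by linear_combination h - h')
                    · exact h1 (by linear_combination h' - h)
                  · rcases hev with rfl | rfl
                    · exact h3 (by linear_combination h - h')
                    · exact h1 (by linear_combination h - h')
                · rcases hme with h' | h'
                  · rcases hev with rfl | rfl
                    · exact h1 (by linear_combination h' - h)
                    · exact h3 (by linear_combination h' - h)
                  · rcases hev with rfl | rfl
                    · exact h1 (by linear_combination h - h')
                    · exact h1 (by linear_combination h' - h)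
              rcases hadj with hje | hje
              · -- robot at mid + 1
                have hout := hfar 1 (Or.inl rfl) hm1 hje
                have hmove := hM6s.resolve_right (fun hnil => hout (hnil.1 1 (Or.inl rfl)))
                obtain ⟨d, hd, hout', hin', hC'⟩ := hmove
                rcases hd with rfl | rfl
                · have hland : E s (sched s) - 1 = mid := by rw [hxs, hje]; ring
                  refine ⟨mid, hm1, hm2, hmp, hmp2, ?_⟩
                  intro i
                  constructor
                  · rintro ⟨r, hr0, hrs1, hre⟩
                    rcases Nat.lt_succ_iff_lt_or_eq.1 hrs1 with h | rfl
                    · have hij : i ≠ sched s := by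
                        intro he; exact haj ⟨r, hr0, h, by rw [hre, he]⟩
                      rw [hC', Function.update_of_ne hij]
                      exact (hpos i).1 ⟨r, hr0, h, hre⟩
                    · rw [← hre, hC', Function.update_self]
                      exact hland
                  · intro hna
                    have hij : i ≠ sched s := fun he => hna ⟨s, hs, Nat.lt_succ_self s, he.symm⟩
                    rw [hC', Function.update_of_ne hij]
                    exact (hpos i).2 (fun ⟨r, a, b, c⟩ => hna ⟨r, a, by omega, c⟩)
                · exfalso
                  apply hout'
                  have h' : E s (sched s) + -1 = mid := by rw [hxs, hje]; ring
                  rw [h', hocS]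
                  exact Set.mem_insert _ _
              · -- robot at mid - 1
                have hje' : E t₀ (sched s) = mid + -1 := by rw [hje]; ring
                have hm2' : mid + -1 = p ∨ mid + -1 = p + 2 := by
                  rw [show mid + -1 = mid - 1 from by ring]; exact hm2
                have hout := hfar (-1) (Or.inr rfl) hm2' hje'
                have hmove := hM6s.resolve_right (fun hnil => hout (hnil.1 (-1) (Or.inr rfl)))
                obtain ⟨d, hd, hout', hin', hC'⟩ := hmove
                rcases hd with rfl | rfl
                · exfalso
                  apply hout'
                  have h' : E s (sched s) + 1 = mid := by rw [hxs, hje]; ring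
                  rw [h', hocS]
                  exact Set.mem_insert _ _
                · have hland : E s (sched s) - -1 = mid := by rw [hxs, hje]; ring
                  refine ⟨mid, hm1, hm2, hmp, hmp2, ?_⟩
                  intro i
                  constructor
                  · rintro ⟨r, hr0, hrs1, hre⟩
                    rcases Nat.lt_succ_iff_lt_or_eq.1 hrs1 with h | rfl
                    · have hij : i ≠ sched s := by
                        intro he; exact haj ⟨r, hr0, h, by rw [hre, he]⟩
                      rw [hC', Function.update_of_ne hij]
                      exact (hpos i).1 ⟨r, hr0, h, hre⟩
                    · rw [← hre, hC', Function.update_self]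
                      exact hland
                  · intro hna
                    have hij : i ≠ sched s := fun he => hna ⟨s, hs, Nat.lt_succ_self s, he.symm⟩
                    rw [hC', Function.update_of_ne hij]
                    exact (hpos i).2 (fun ⟨r, a, b, c⟩ => hna ⟨r, a, by omega, c⟩)
          · -- hQq false : occ (E s) = {mid, p} is an o2 configuration, impossible
            exfalso
            have hocS : occ (E s) = {mid, p} := by
              ext y
              simp only [occ, Set.mem_range, Set.mem_insert_iff, Set.mem_singleton_iff]
              constructor
              · rintro ⟨i, rfl⟩
                by_cases hai : ∃ r, t₀ ≤ r ∧ r < s ∧ sched r = i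
                · exact Or.inl ((hpos i).1 hai)
                · have hh := (hpos i).2 hai
                  rcases (hmem0 (E t₀ i)).1 (Set.mem_range_self i) with h | h
                  · exact Or.inr (hh.trans h)
                  · exact absurd ⟨i, hai, h⟩ hQq
              · rintro (rfl | rfl)
                · exact ⟨i₀, hmids⟩
                · obtain ⟨i, hna, hei⟩ := hQp; exact ⟨i, by rw [(hpos i).2 hna, hei]⟩
            have ho2 : propO2 (occ (E s)) := by
              rcases adjMid h2 hm1 hm2 (Or.inl rfl : p = p ∨ p = p + 2) with h | h
              · exact ⟨mid, by rw [hocS, h]⟩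
              · refine ⟨p, ?_⟩
                rw [hocS, show mid = p + 1 from by linear_combination -h]
                exact Set.pair_comm _ _
            rcases hT56 with ⟨-, -, hno2, -⟩ | ⟨-, hno2, -⟩
            · exact hno2 ho2
            · exact hno2 ho2
        · by_cases hQq : ∃ i : Fin k, ¬ (∃ r, t₀ ≤ r ∧ r < s ∧ sched r = i) ∧ E t₀ i = p + 2
          · -- hQp false : occ (E s) = {mid, p+2} is an o2 configuration, impossible
            exfalso
            have hocS : occ (E s) = {mid, p + 2} := by
              ext y
              simp only [occ, Set.mem_range, Set.mem_insert_iff, Set.mem_singleton_iff]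
              constructor
              · rintro ⟨i, rfl⟩
                by_cases hai : ∃ r, t₀ ≤ r ∧ r < s ∧ sched r = i
                · exact Or.inl ((hpos i).1 hai)
                · have hh := (hpos i).2 hai
                  rcases (hmem0 (E t₀ i)).1 (Set.mem_range_self i) with h | h
                  · exact absurd ⟨i, hai, h⟩ hQp
                  · exact Or.inr (hh.trans h)
              · rintro (rfl | rfl)
                · exact ⟨i₀, hmids⟩
                · obtain ⟨i, hna, hei⟩ := hQq; exact ⟨i, by rw [(hpos i).2 hna, hei]⟩
            have ho2 : propO2 (occ (E s)) := by
              rcases adjMid h2 hm1 hm2 (Or.inr rfl : p + 2 = p ∨ p + 2 = p + 2) with h | h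
              · exact ⟨mid, by rw [hocS, h]⟩
              · refine ⟨p + 2, ?_⟩
                rw [hocS, show mid = p + 2 + 1 from by linear_combination -h]
                exact Set.pair_comm _ _
            rcases hT56 with ⟨-, -, hno2, -⟩ | ⟨-, hno2, -⟩
            · exact hno2 ho2
            · exact hno2 ho2
          · -- everyone activated : occ (E s) = {mid} is an o1 configuration, impossible
            exfalso
            have hall : ∀ i : Fin k, E s i = mid := by
              intro i
              by_cases hai : ∃ r, t₀ ≤ r ∧ r < s ∧ sched r = i
              · exact (hpos i).1 hai
              · exfalso
                rcases (hmem0 (E t₀ i)).1 (Set.mem_range_self i) with h | h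
                · exact hQp ⟨i, hai, h⟩
                · exact hQq ⟨i, hai, h⟩
            have ho1 : propO1 (occ (E s)) := by
              refine ⟨mid, ?_⟩
              ext y
              simp only [occ, Set.mem_range, Set.mem_singleton_iff]
              constructor
              · rintro ⟨i, rfl⟩; exact hall i
              · rintro rfl; exact ⟨i₀, hall i₀⟩
            rcases hT56 with ⟨-, -, -, hno1⟩ | ⟨-, -, hno1⟩
            · exact hno1 ho1
            · exact hno1 ho1
      · -- nobody activated yet : configuration unchanged, T5 move happens
        have hEs : E s = E t₀ := funext fun i => (hpos i).2 (fun h => hA ⟨i, h⟩)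
        have hT5s : inT5 (occ (E s)) := by
          rcases hT56 with h | h
          · exact h
          · exfalso
            obtain ⟨⟨v, hv⟩, -, -⟩ := h
            rw [hEs, hocc0] at hv
            have h1v : v = p ∨ v = p + 2 := by
              have hx : v ∈ ({p, p + 2} : Set (ZMod n)) := by rw [hv]; simp
              simpa using hx
            have h2v : v + 1 = p ∨ v + 1 = p + 2 := by
              have hx : v + 1 ∈ ({p, p + 2} : Set (ZMod n)) := by rw [hv]; simp
              simpa using hx
            have h3v : v + 2 = p ∨ v + 2 = p + 2 := by
              have hx : v + 2 ∈ ({p, p + 2} : Set (ZMod n)) := by rw [hv]; simp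
              simpa using hx
            exact three_ne_pair (a := v) (b := v + 1) (c := v + 2)
              (fun he => h1 (by linear_combination -he))
              (fun he => h2 (by linear_combination -he))
              (fun he => h1 (by linear_combination -he)) h1v h2v h3v
        obtain ⟨d, hd, hd1, hd2, hC'⟩ := hM5 hT5s
        rw [hEs] at hd1 hd2 hC'
        have hxj : E t₀ (sched s) = p ∨ E t₀ (sched s) = p + 2 :=
          (hmem0 _).1 (Set.mem_range_self (sched s))
        refine ⟨E t₀ (sched s) + d, ?_, ?_, ?_, ?_, ?_⟩
        · rcases hd with rfl | rfl
          · exact (hmem0 _).1 hd2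
          · rw [show E t₀ (sched s) + -1 + 1 = E t₀ (sched s) from by ring]
            exact hxj
        · rcases hd with rfl | rfl
          · rw [show E t₀ (sched s) + 1 - 1 = E t₀ (sched s) from by ring]
            exact hxj
          · rw [show E t₀ (sched s) + -1 - 1 = E t₀ (sched s) + -1 + -1 from by ring]
            exact (hmem0 _).1 hd2
        · intro he; exact hd1 ((hmem0 _).2 (Or.inl he))
        · intro he; exact hd1 ((hmem0 _).2 (Or.inr he))
        · intro i
          constructor
          · rintro ⟨r, hr0, hrs1, hre⟩
            rcases Nat.lt_succ_iff_lt_or_eq.1 hrs1 with h | rfl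
            · exact absurd ⟨i, r, hr0, h, hre⟩ hA
            · rw [← hre, hC', Function.update_self]
          · intro hna
            have hij : i ≠ sched s := fun he => hna ⟨s, hs, Nat.lt_succ_self s, he.symm⟩
            rw [hC', Function.update_of_ne hij]
  -- Phase 2 : from the T7 configuration, gather within the rest of the epoch
  have phase2 : ∀ mid w : ZMod n, (w = mid + 1 ∨ w = mid - 1) → w ≠ mid →
      (∃ i : Fin k, ∃ r, t₀ ≤ r ∧ r < t₁ ∧ sched r = i) →
      (∀ i : Fin k, (∃ r, t₀ ≤ r ∧ r < t₁ ∧ sched r = i) → E t₁ i = mid) →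
      (∀ i : Fin k, ¬ (∃ r, t₀ ≤ r ∧ r < t₁ ∧ sched r = i) → E t₁ i = w) →
      (∃ i : Fin k, ¬ (∃ r, t₀ ≤ r ∧ r < t₁ ∧ sched r = i)) →
      ∃ t, t₁ ≤ t ∧ t ≤ t₁ + k ∧ inT8 (occ (E t)) ∧ ∀ i j : Fin k, E t i = E t j := by
    intro mid w hwadj hwm hAne hmidf hwf hBne
    have ht1k : t₁ < t₀ + k := by
      by_contra hcon
      obtain ⟨b, hb⟩ := hBne
      obtain ⟨r, hr0, hrk, hrb⟩ := hwin b t₀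
      exact hb ⟨r, hr0, by omega, hrb⟩
    have key2 : ∀ s, t₁ ≤ s → s ≤ t₀ + k → ∀ i : Fin k,
        ((∃ r, t₀ ≤ r ∧ r < s ∧ sched r = i) → E s i = mid) ∧
        (¬ (∃ r, t₀ ≤ r ∧ r < s ∧ sched r = i) → E s i = w) := by
      intro s hs
      induction s, hs using Nat.le_induction with
      | base => intro _ i; exact ⟨hmidf i, hwf i⟩
      | succ s hs ih =>
        intro hsk
        have ihs := ih (by omega)
        have hjna : ¬ ∃ r, t₀ ≤ r ∧ r < s ∧ sched r = sched s := by
          rintro ⟨r, hr0, hrs, hre⟩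
          exact huniq r s hrs (by omega) hre
        have hEsj : E s (sched s) = w := (ihs (sched s)).2 hjna
        have hocc2 : occ (E s) = {mid, w} := by
          ext y
          simp only [occ, Set.mem_range, Set.mem_insert_iff, Set.mem_singleton_iff]
          constructor
          · rintro ⟨i', rfl⟩
            by_cases h' : ∃ r, t₀ ≤ r ∧ r < s ∧ sched r = i'
            · exact Or.inl ((ihs i').1 h')
            · exact Or.inr ((ihs i').2 h')
          · rintro (rfl | rfl)
            · obtain ⟨i₀, r, a, b, c⟩ := hAne
              exact ⟨i₀, (ihs i₀).1 ⟨r, a, by omega, c⟩⟩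
            · exact ⟨sched s, hEsj⟩
        have hT7s : inT7 (occ (E s)) := by
          constructor
          · rcases hwadj with h' | h'
            · exact ⟨mid, by rw [hocc2, h']⟩
            · refine ⟨w, ?_⟩
              rw [hocc2, show mid = w + 1 from by linear_combination -h']
              exact Set.pair_comm _ _
          · rintro ⟨y, hy⟩
            rw [hocc2] at hy
            apply hwm
            have hm' : mid ∈ ({y} : Set (ZMod n)) := by rw [← hy]; exact Set.mem_insert _ _
            have hw' : w ∈ ({y} : Set (ZMod n)) := by
              rw [← hy]; exact Set.mem_insert_of_mem _ rfl
            simp only [Set.mem_singleton_iff] at hm' hw'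
            rw [hm', hw']
        obtain ⟨d, hd, hin, hC'⟩ := hstep s hT7s
        have hland : E s (sched s) + d = mid := by
          rw [hocc2] at hin
          simp only [Set.mem_insert_iff, Set.mem_singleton_iff] at hin
          rcases hin with h' | h'
          · exact h'
          · exfalso
            rw [hEsj] at h'
            rcases hd with rfl | rfl
            · exact h1 (by linear_combination h')
            · exact h1 (by linear_combination -h')
        intro i
        constructor
        · rintro ⟨r, hr0, hrs1, hre⟩
          rcases Nat.lt_succ_iff_lt_or_eq.1 hrs1 with h | rfl
          · have hij : i ≠ sched s := by
              intro he
              exact hjna ⟨r, hr0, h, by rw [hre, he]⟩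
            rw [hC', Function.update_of_ne hij]
            exact (ihs i).1 ⟨r, hr0, h, hre⟩
          · rw [← hre, hC', Function.update_self]
            exact hland
        · intro hna
          have hij : i ≠ sched s := fun he => hna ⟨s, by omega, Nat.lt_succ_self s, he.symm⟩
          rw [hC', Function.update_of_ne hij]
          exact (ihs i).2 (fun ⟨r, a, b, c⟩ => hna ⟨r, a, by omega, c⟩)
    have hall : ∀ i : Fin k, E (t₀ + k) i = mid := by
      intro i
      obtain ⟨r, a, b, c⟩ := hwin i t₀
      exact (key2 (t₀ + k) (by omega) le_rfl i).1 ⟨r, a, b, c⟩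
    refine ⟨t₀ + k, by omega, by omega, ⟨mid, ?_⟩, fun i j => by rw [hall i, hall j]⟩
    ext y
    simp only [occ, Set.mem_range, Set.mem_singleton_iff]
    constructor
    · rintro ⟨i, rfl⟩; exact hall i
    · rintro rfl; exact ⟨⟨0, hk⟩, hall _⟩
  -- analysis of the configuration at time t₁
  obtain ⟨mid, hm1, hm2, hmp, hmp2, hpos⟩ := key1 t₁ h01 le_rfl
  by_cases hA : ∃ i : Fin k, ∃ r, t₀ ≤ r ∧ r < t₁ ∧ sched r = i
  · obtain ⟨i₀, hi₀⟩ := hA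
    have hmids : E t₁ i₀ = mid := (hpos i₀).1 hi₀
    by_cases hQp : ∃ i : Fin k, ¬ (∃ r, t₀ ≤ r ∧ r < t₁ ∧ sched r = i) ∧ E t₀ i = p
    · by_cases hQq : ∃ i : Fin k, ¬ (∃ r, t₀ ≤ r ∧ r < t₁ ∧ sched r = i) ∧ E t₀ i = p + 2
      · exfalso
        have hocS : occ (E t₁) = {mid, p, p + 2} := by
          ext y
          simp only [occ, Set.mem_range, Set.mem_insert_iff, Set.mem_singleton_iff]
          constructor
          · rintro ⟨i, rfl⟩
            by_cases hai : ∃ r, t₀ ≤ r ∧ r < t₁ ∧ sched r = i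
            · exact Or.inl ((hpos i).1 hai)
            · have hh := (hpos i).2 hai
              rw [hh]
              exact Or.inr ((hmem0 _).1 (Set.mem_range_self i))
          · rintro (rfl | rfl | rfl)
            · exact ⟨i₀, hmids⟩
            · obtain ⟨i, hna, hei⟩ := hQp; exact ⟨i, by rw [(hpos i).2 hna, hei]⟩
            · obtain ⟨i, hna, hei⟩ := hQq; exact ⟨i, by rw [(hpos i).2 hna, hei]⟩
        rw [hocS] at hu
        have hmq : mid = u ∨ mid = u + 1 := by
          have hx : mid ∈ ({u, u + 1} : Set (ZMod n)) := by rw [← hu]; simp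
          simpa using hx
        have hpq : p = u ∨ p = u + 1 := by
          have hx : p ∈ ({u, u + 1} : Set (ZMod n)) := by rw [← hu]; simp
          simpa using hx
        have hpq2 : p + 2 = u ∨ p + 2 = u + 1 := by
          have hx : p + 2 ∈ ({u, u + 1} : Set (ZMod n)) := by rw [← hu]; simp
          simpa using hx
        exact three_ne_pair hmp hmp2 hpne hmq hpq hpq2
      · -- the non-activated robots all sit at p
        refine phase2 mid p (adjMid h2 hm1 hm2 (Or.inl rfl)) (fun he => hmp he.symm) ⟨i₀, hi₀⟩
          (fun i => (hpos i).1) ?_ ?_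
        · intro i hna
          rcases (hmem0 (E t₀ i)).1 (Set.mem_range_self i) with h | h
          · rw [(hpos i).2 hna, h]
          · exact absurd ⟨i, hna, h⟩ hQq
        · obtain ⟨i, hna, -⟩ := hQp; exact ⟨i, hna⟩
    · by_cases hQq : ∃ i : Fin k, ¬ (∃ r, t₀ ≤ r ∧ r < t₁ ∧ sched r = i) ∧ E t₀ i = p + 2
      · refine phase2 mid (p + 2) (adjMid h2 hm1 hm2 (Or.inr rfl)) (fun he => hmp2 he.symm)
          ⟨i₀, hi₀⟩ (fun i => (hpos i).1) ?_ ?_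
        · intro i hna
          rcases (hmem0 (E t₀ i)).1 (Set.mem_range_self i) with h | h
          · exact absurd ⟨i, hna, h⟩ hQp
          · rw [(hpos i).2 hna, h]
        · obtain ⟨i, hna, -⟩ := hQq; exact ⟨i, hna⟩
      · exfalso
        apply hnO1C
        refine ⟨mid, ?_⟩
        ext y
        simp only [occ, Set.mem_range, Set.mem_singleton_iff]
        constructor
        · rintro ⟨i, rfl⟩
          by_cases hai : ∃ r, t₀ ≤ r ∧ r < t₁ ∧ sched r = i
          · exact (hpos i).1 hai
          · exfalso
            rcases (hmem0 (E t₀ i)).1 (Set.mem_range_self i) with h | h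
            · exact hQp ⟨i, hai, h⟩
            · exact hQq ⟨i, hai, h⟩
        · rintro rfl; exact ⟨i₀, hmids⟩
  · exfalso
    have hEs : E t₁ = E t₀ := funext fun i => (hpos i).2 (fun h => hA ⟨i, h⟩)
    rw [hEs, hocc0] at hu
    have hpu : p = u ∨ p = u + 1 := by
      have hx : p ∈ ({u, u + 1} : Set (ZMod n)) := by rw [← hu]; simp
      simpa using hx
    have hpu2 : p + 2 = u ∨ p + 2 = u + 1 := by
      have hx : p + 2 ∈ ({u, u + 1} : Set (ZMod n)) := by rw [← hu]; simp
      simpa using hx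
    rcases hpu with h | h <;> rcases hpu2 with h' | h'
    · exact h2 (by linear_combination h' - h)
    · exact h1 (by linear_combination h' - h)
    · exact h3 (by linear_combination h' - h)
    · exact h2 (by linear_combination h' - h)


end RobotRing
end

section
/- For every n ≥ 6, every deterministic algorithm A, every Round Robin scheduler, and every choice of the adversary, if the execution of A from the initial configuration in which all n vertices of the n-ring are occupied by exactly one robot each reaches a configuration in which all robots occupy one common vertex, then at least ⌊n/2⌋ epochs elapse before this happens. Consequently, any gathering algorithm on rings requires at least ⌊n/2⌋ epochs in the worst case, so an algorithm gathering within at most n−3 epochs is asymptotically time optimal. -/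
/-!
Robots on an anonymous `n`-ring (the cycle on `ZMod n`).  A configuration of `k`
robots is a function `Fin k → ZMod n` (several robots may share a vertex: a
multiplicity).  Robots are anonymous, oblivious and disoriented: an algorithm
only sees the set of occupied vertices expressed as offsets in the robot's own
local frame, whose orientation (reflection) is chosen by the adversary at each
activation.  A sequential scheduler activates one robot per round.
-/

namespace RobotRing

/-!
Each activation moves a robot by at most one edge, and a Round Robin scheduler activates every
robot at most `M` times during the first `M` epochs. As the robots initially occupy every vertex,
some robot starts at ring distance `⌊n/2⌋` from the gathering vertex, so it needs `⌊n/2⌋`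
activations to get there.
-/

open Finset

lemma ringDist_eq_natAbs_valMinAbs {n : ℕ} (a b : ZMod n) :
    ringDist a b = (a - b).valMinAbs.natAbs := by
  rcases n with - | n
  · change ℤ at a b
    change min (a - b).natAbs (b - a).natAbs = (a - b).natAbs
    rw [← Int.natAbs_neg (b - a), neg_sub, min_self]
  · rw [ZMod.valMinAbs_natAbs_eq_min, ringDist, ← neg_sub a b, ZMod.neg_val]
    split_ifs with h <;> simp [h]

lemma ringDist_triangle {n : ℕ} (a b c : ZMod n) :
    ringDist a c ≤ ringDist a b + ringDist b c := by
  simp only [ringDist_eq_natAbs_valMinAbs]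
  calc (a - c).valMinAbs.natAbs = ((a - b) + (b - c)).valMinAbs.natAbs := by
        rw [sub_add_sub_cancel]
    _ ≤ ((a - b).valMinAbs + (b - c).valMinAbs).natAbs := ZMod.natAbs_valMinAbs_add_le _ _
    _ ≤ _ := Int.natAbs_add_le _ _

lemma ringDist_add_natCast_self {n m : ℕ} (hm : m ≤ n / 2) (a : ZMod n) :
    ringDist (a + (m : ZMod n)) a = m := by
  rw [ringDist_eq_natAbs_valMinAbs, add_sub_cancel_left, ZMod.valMinAbs_natCast_of_le_half hm,
    Int.natAbs_natCast]

lemma natAbs_valMinAbs_one_le {n : ℕ} : (1 : ZMod n).valMinAbs.natAbs ≤ 1 := by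
  rcases n with - | n
  · rfl
  · rw [ZMod.valMinAbs_natAbs_eq_min, ZMod.val_one_eq_one_mod]
    exact (min_le_left _ _).trans (Nat.mod_le _ _)

lemma ringDist_add_sgn_mul_le {n : ℕ} (a b : ZMod n) (e : Bool) (s : SignType) :
    ringDist a (b + sgn e * (s : ZMod n)) ≤ ringDist a b + 1 := by
  refine (ringDist_triangle a b _).trans (Nat.add_le_add_left ?_ _)
  rw [ringDist_eq_natAbs_valMinAbs, sub_add_cancel_left, ZMod.natAbs_valMinAbs_neg]
  cases s <;> cases e <;> simp [sgn, natAbs_valMinAbs_one_le]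

section Execution

variable {n k : ℕ} (A : Algo n)

lemma ringDist_step_le (p : ZMod n) (C : Config n k) (j i : Fin k) (e : Bool) :
    ringDist p (step A C j e i) ≤ ringDist p (C i) + if j = i then 1 else 0 := by
  rcases eq_or_ne j i with rfl | hji
  · simpa [step] using ringDist_add_sgn_mul_le p (C j) e _
  · simp [step, Function.update_of_ne hji.symm, hji]

lemma ringDist_exec_le (C₀ : Config n k) (sched : ℕ → Fin k) (env : ℕ → Bool) (i : Fin k)
    (t : ℕ) : ringDist (C₀ i) (exec A C₀ sched env t i) ≤ #{s ∈ range t | sched s = i} := by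
  induction t with
  | zero => simp [exec, ringDist]
  | succ t ih =>
    rw [card_filter, sum_range_succ, ← card_filter]
    exact (ringDist_step_le A _ _ _ _ _).trans (Nat.add_le_add_right ih _)

end Execution

lemma IsRoundRobin.exists_modEq_iff {k : ℕ} {sched : ℕ → Fin k} (h : IsRoundRobin sched)
    (i : Fin k) : ∃ r : ℕ, ∀ s, sched s = i ↔ s ≡ r [MOD k] := by
  obtain ⟨π, hπ⟩ := h
  refine ⟨π.symm i, fun s => ?_⟩
  rw [hπ s (Nat.mod_lt s i.pos), ← π.eq_symm_apply, Fin.ext_iff, Nat.ModEq,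
    Nat.mod_eq_of_lt (π.symm i).isLt]

lemma IsRoundRobin.card_activations_le {k : ℕ} {sched : ℕ → Fin k} (h : IsRoundRobin sched)
    (i : Fin k) {M t : ℕ} (ht : t ≤ M * k) : #{s ∈ range t | sched s = i} ≤ M := by
  obtain ⟨r, hr⟩ := h.exists_modEq_iff i
  simp_rw [hr, ← Nat.count_eq_card_filter_range]
  calc Nat.count (· ≡ r [MOD k]) t ≤ Nat.count (· ≡ r [MOD k]) (M * k) := Nat.count_monotone _ ht
    _ = M := by simp [Nat.count_modEq_card _ i.pos, i.pos.ne']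

/-- for every `n ≥ 6`, every deterministic algorithm `A`, every
Round Robin scheduler and every choice of the adversary, if the execution of `A`
from the initial configuration in which all `n` vertices of the `n`-ring are
occupied by exactly one robot each reaches, at round `t`, a configuration where
all robots occupy one common vertex, then at least `⌊n/2⌋` epochs (of `n` rounds
each) elapse before this happens, i.e. `t` lies strictly beyond the first
`⌊n/2⌋ - 1` complete epochs.  Hence any gathering algorithm on rings requires at
least `⌊n/2⌋` epochs in the worst case, so gathering within `n - 3` epochs is
asymptotically time optimal. -/
theorem stmt18 (n : ℕ) (hn : 6 ≤ n) (A : Algo n)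
    (C₀ : Config n n) (hC₀ : Function.Bijective C₀)
    (sched : ℕ → Fin n) (hRR : IsRoundRobin sched) (env : ℕ → Bool)
    (t : ℕ)
    (hg : ∀ i j : Fin n, exec A C₀ sched env t i = exec A C₀ sched env t j) :
    (n / 2 - 1) * n < t := by
  by_contra! hearly
  set g := exec A C₀ sched env t ⟨0, by omega⟩
  obtain ⟨i, hi⟩ := hC₀.surjective (g + (n / 2 : ℕ))
  have hfar : ringDist (C₀ i) (exec A C₀ sched env t i) = n / 2 := by
    rw [hi, hg i _, ringDist_add_natCast_self le_rfl]
  have hnear := (ringDist_exec_le A C₀ sched env i t).trans (hRR.card_activations_le i hearly)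
  omega

end RobotRing
end
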